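/- arXiv:1910.01222 — 3 statements merged into one kernel-verified Lean document; each statement's English description precedes it below -/
import Mathlib

section
/- Let p be a prime and let A be a nonzero abelian p-group (i.e., every element of A has order a power of p). The endomorphism ring End(A) is centrally essential if and only if A is isomorphic to a cyclic group ℤ/p^kℤ for some k ≥ 1 or A is isomorphic to the Prüfer group ℤ(p^∞). -/
/-- A ring `R` is centrally essential if for every nonzero `a : R` there exist
nonzero central elements `x, y` with `a * x = y`. -/
def IsCentrallyEssential (R : Type*) [Ring R] : Prop :=
  ∀ a : R, a ≠ 0 → ∃ x y : R, x ∈ Set.center R ∧ y ∈ Set.center R ∧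
    x ≠ 0 ∧ y ≠ 0 ∧ a * x = y

/-- The quotient group `ℚ/ℤ`. -/
abbrev QmodZ : Type := ℚ ⧸ AddSubgroup.zmultiples (1 : ℚ)

/-- The `p`-primary component of an abelian group: the subgroup of elements
killed by a power of `p`. -/
def primaryComp (A : Type*) [AddCommGroup A] (p : ℕ) : AddSubgroup A where
  carrier := {a | ∃ n : ℕ, p ^ n • a = 0}
  zero_mem' := ⟨0, smul_zero _⟩
  add_mem' := by
    rintro a b ⟨m, hm⟩ ⟨n, hn⟩
    refine ⟨m + n, ?_⟩
    have ha : p ^ (m + n) • a = 0 := by rw [pow_add, mul_comm, mul_smul, hm, smul_zero]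
    have hb : p ^ (m + n) • b = 0 := by rw [pow_add, mul_smul, hn, smul_zero]
    rw [smul_add, ha, hb, add_zero]
  neg_mem' := by
    rintro a ⟨n, hn⟩
    exact ⟨n, by rw [smul_neg, hn, neg_zero]⟩

/-- The Prüfer group `ℤ(p^∞)`, realized as the `p`-primary component of `ℚ/ℤ`. -/
def Prufer (p : ℕ) : AddSubgroup QmodZ := primaryComp QmodZ p

/-!
If `End A` is centrally essential, every idempotent `e` is central: the definition, applied to
`e * r * (1 - e)` and `(1 - e) * r * e`, forces both to vanish. Hence whenever `r ∘ s = id` the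
projection `s ∘ r` commutes with every endomorphism, so no endomorphism moves an element of
`ker r` out of `ker r`, or an element of `range s` out of `range s`.

If the `p`-group `A` is not `p`-divisible, some `b` of order `p^k` has `p^(k-1) • b ∉ p^k A`; a
homomorphism `A / p^k A → ℚ/ℤ` sending `b` to `1/p^k` takes values in `⟨1/p^k⟩ ≅ ZMod (p^k)` and
gives a retraction onto `⟨b⟩`. If `A` is `p`-divisible it is divisible, hence injective, so
`1/p ↦ a` (with `a` of order `p`) extends to a map `ℤ(p^∞) → A`, injective because it is
injective on elements of order `p`; extending the inclusion `ℤ(p^∞) ⊆ ℚ/ℤ` along it gives a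
retraction. In both cases an element of order `p` in `ker r` yields an endomorphism breaking the
commutation, so the retraction is an isomorphism.

Conversely, `ZMod (p^k)` and `ℤ(p^∞)` are unions of cyclic subgroups preserved by every
endomorphism, so their endomorphism rings are commutative.
-/

open AddSubgroup Function

namespace IsCentrallyEssential

variable {R : Type*} [Ring R]

theorem eq_zero_of_mul_eq_self_of_mul_eq_zero (hR : IsCentrallyEssential R) {a e : R}
    (h₁ : e * a = a) (h₂ : a * e = 0) : a = 0 := by
  by_contra ha
  obtain ⟨x, y, hx, hy, -, hy0, rfl⟩ := hR a ha
  rw [Semigroup.mem_center_iff] at hx hy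
  apply hy0
  calc a * x = (e * a - a * e) * x := by rw [h₁, h₂, sub_zero]
    _ = e * (a * x) - a * x * e := by rw [sub_mul, mul_assoc, mul_assoc, hx e, mul_assoc]
    _ = 0 := by rw [hy e, sub_self]

theorem mul_mul_one_sub_eq_zero (hR : IsCentrallyEssential R) {e : R} (he : IsIdempotentElem e)
    (r : R) : e * r * (1 - e) = 0 :=
  hR.eq_zero_of_mul_eq_self_of_mul_eq_zero (by rw [← mul_assoc, ← mul_assoc, he.eq])
    (by rw [mul_assoc, he.one_sub_mul_self, mul_zero])

theorem mem_center_of_isIdempotentElem (hR : IsCentrallyEssential R) {e : R}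
    (he : IsIdempotentElem e) : e ∈ Set.center R := by
  refine Semigroup.mem_center_iff.2 fun r => ?_
  have h₁ := hR.mul_mul_one_sub_eq_zero he r
  have h₂ := hR.mul_mul_one_sub_eq_zero he.one_sub r
  rw [mul_sub, mul_one, sub_eq_zero] at h₁
  rw [sub_sub_cancel, sub_mul, sub_mul, one_mul, sub_eq_zero] at h₂
  rw [h₂, ← h₁]

theorem of_commute [Nontrivial R] (h : ∀ a b : R, Commute a b) : IsCentrallyEssential R :=
  fun a ha => ⟨1, a, Set.one_mem_center, Semigroup.mem_center_iff.2 fun b => h b a, one_ne_zero,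
    ha, mul_one a⟩

theorem apply_retraction_comm {A B : Type*} [AddCommGroup A] [AddCommGroup B]
    (hR : IsCentrallyEssential (AddMonoid.End A)) {s : B →+ A} {r : A →+ B}
    (hrs : ∀ y, r (s y) = y) (ψ : A →+ A) (x : A) : ψ (s (r x)) = s (r (ψ x)) := by
  let E : AddMonoid.End A := s.comp r
  have hE : IsIdempotentElem E := AddMonoidHom.ext fun x => congrArg s (hrs (r x))
  exact DFunLike.congr_fun
    (Semigroup.mem_center_iff.1 (hR.mem_center_of_isIdempotentElem hE) (ψ : AddMonoid.End A)) x

end IsCentrallyEssential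

section Cyclic

variable {G : Type*} [AddGroup G] {n : ℕ}

def zmodMultiplesHom (v : G) (hv : n • v = 0) : ZMod n →+ G :=
  ZMod.lift n ⟨zmultiplesHom G v, by simpa using hv⟩

@[simp]
theorem zmodMultiplesHom_intCast (v : G) (hv : n • v = 0) (t : ℤ) :
    zmodMultiplesHom v hv t = t • v :=
  ZMod.lift_coe _ _ t

@[simp]
theorem zmodMultiplesHom_one (v : G) (hv : n • v = 0) : zmodMultiplesHom v hv 1 = v := by
  simpa using zmodMultiplesHom_intCast v hv 1

theorem zmodMultiplesHom_injective (v : G) (hv : n • v = 0) (h : n ∣ addOrderOf v) :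
    Injective (zmodMultiplesHom v hv) :=
  (ZMod.lift_injective _).2 fun m hm => (ZMod.intCast_zmod_eq_zero_iff_dvd m n).2
    ((Int.natCast_dvd_natCast.2 h).trans (addOrderOf_dvd_iff_zsmul_eq_zero.2 hm))

end Cyclic

theorem Module.Baer.exists_addMonoidHom_apply_eq {Q G : Type*} [AddCommGroup Q] [AddCommGroup G]
    (hQ : Module.Baer ℤ Q) {v : G} {w : Q} (h : addOrderOf w ∣ addOrderOf v) :
    ∃ φ : G →+ Q, φ v = w := by
  obtain ⟨φ, hφ⟩ := hQ.extension_property_addMonoidHom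
    (zmodMultiplesHom v (addOrderOf_nsmul_eq_zero v))
    (zmodMultiplesHom_injective _ _ dvd_rfl)
    (zmodMultiplesHom w (addOrderOf_dvd_iff_nsmul_eq_zero.1 h))
  exact ⟨φ, by simpa using DFunLike.congr_fun hφ 1⟩

theorem exists_retraction_of_comp_injective {A B C : Type*} [AddGroup A] [AddGroup B] [AddGroup C]
    (g : A →+ C) (s : B →+ A) (hinj : Injective (g.comp s)) (hrange : g.range ≤ (g.comp s).range) :
    ∃ r : A →+ B, ∀ y, r (s y) = y :=
  ⟨(AddMonoidHom.ofInjective hinj).symm.toAddMonoidHom.comp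
      (g.codRestrict _ fun x => hrange ⟨x, rfl⟩),
    fun y => by
      change (AddMonoidHom.ofInjective hinj).symm _ = y
      exact (AddEquiv.symm_apply_eq _).2 (Subtype.ext (AddMonoidHom.ofInjective_apply hinj).symm)⟩

namespace AddMonoid.End

variable {A B : Type*} [AddCommGroup A] [AddCommGroup B]

theorem commute_of_forall_mem_zmultiples
    (h : ∀ y : A, ∃ c, y ∈ zmultiples c ∧ ∀ f : AddMonoid.End A, f c ∈ zmultiples c)
    (f g : AddMonoid.End A) : Commute f g := by
  refine AddMonoidHom.ext fun y => ?_
  obtain ⟨c, hy, hc⟩ := h y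
  obtain ⟨t, rfl⟩ := mem_zmultiples_iff.1 hy
  obtain ⟨a, ha⟩ := mem_zmultiples_iff.1 (hc f)
  obtain ⟨b, hb⟩ := mem_zmultiples_iff.1 (hc g)
  change f (g (t • c)) = g (f (t • c))
  simp only [map_zsmul, ← ha, ← hb, smul_smul, mul_right_comm]

theorem commute_of_addEquiv (e : A ≃+ B) (h : ∀ f g : AddMonoid.End B, Commute f g)
    (f g : AddMonoid.End A) : Commute f g :=
  Commute.of_map ((addMonoidEndRingEquivInt A).trans
    (e.toIntLinearEquiv.conjRingEquiv.trans (addMonoidEndRingEquivInt B).symm)).injective (h _ _)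

end AddMonoid.End

def IsPPrimary (p : ℕ) (A : Type*) [AddCommGroup A] : Prop :=
  ∀ a : A, ∃ n : ℕ, p ^ n • a = 0

namespace IsPPrimary

variable {p : ℕ} {A : Type*} [AddCommGroup A] (hA : IsPPrimary p A)
include hA

theorem injective_of_forall {B : Type*} [AddCommGroup B] {f : A →+ B}
    (hf : ∀ a, p • a = 0 → f a = 0 → a = 0) : Injective f := by
  refine (injective_iff_map_eq_zero f).2 fun a ha => ?_
  obtain ⟨n, hn⟩ := hA a
  induction n generalizing a with
  | zero => rwa [pow_zero, one_nsmul] at hn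
  | succ n ih =>
    exact hf a (ih (p • a) (by rw [map_nsmul, ha, nsmul_zero]) (by rwa [smul_smul, ← pow_succ])) ha

theorem exists_ne_zero_nsmul_eq_zero (hne : ∃ a : A, a ≠ 0) : ∃ a : A, a ≠ 0 ∧ p • a = 0 := by
  by_contra! H
  obtain ⟨a, ha⟩ := hne
  exact ha (hA.injective_of_forall (f := (0 : A →+ A))
    (fun b hb _ => by_contra fun hb0 => H b hb0 hb) (by simp))

theorem surjective_nsmul (hp : p.Prime) (hdiv : ∀ x : A, ∃ y, p • y = x) {n : ℕ} (hn : n ≠ 0) :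
    Surjective fun a : A => n • a := by
  obtain ⟨e, m, hpm, rfl⟩ := Nat.exists_eq_pow_mul_and_not_dvd hn p hp.ne_one
  have hpow : ∀ k (x : A), ∃ y, p ^ k • y = x := by
    intro k
    induction k with
    | zero => exact fun x => ⟨x, by rw [pow_zero, one_nsmul]⟩
    | succ k ih =>
      intro x
      obtain ⟨y, rfl⟩ := ih x
      obtain ⟨z, rfl⟩ := hdiv y
      exact ⟨z, by rw [pow_succ, mul_smul]⟩
  have hcoprime (x : A) : ∃ y, m • y = x := by
    obtain ⟨N, hN⟩ := hA x
    have hm : m.Coprime (p ^ N) := ((hp.coprime_iff_not_dvd.2 hpm).symm).pow_right N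
    obtain ⟨u, -, hu⟩ := Nat.exists_mul_mod_eq_of_coprime 1 hm (pow_ne_zero N hp.ne_zero)
    exact ⟨u • x, by rw [smul_smul, nsmul_eq_mod_nsmul _ hN, hu, ← nsmul_eq_mod_nsmul _ hN,
      one_nsmul]⟩
  intro x
  obtain ⟨y, rfl⟩ := hpow e x
  obtain ⟨z, rfl⟩ := hcoprime y
  exact ⟨z, mul_smul _ _ _⟩

theorem baer (hp : p.Prime) (hdiv : ∀ x : A, ∃ y, p • y = x) : Module.Baer ℤ A :=
  letI := divisibleByOfSMulRightSurj A ℕ (hA.surjective_nsmul hp hdiv)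
  letI := AddGroup.divisibleByIntOfDivisibleByNat A
  Module.Baer.of_divisible A

theorem exists_pure_element (hnd : ¬ ∀ x : A, ∃ y, p • y = x) :
    ∃ (h : ℕ) (b : A), p ^ (h + 1) • b = 0 ∧ ∀ x : A, p ^ (h + 1) • x ≠ p ^ h • b := by
  contrapose! hnd with H
  have hdiv : ∀ (k : ℕ) (x : A), p ^ k • x = 0 → ∃ y, p • y = x := by
    intro k
    induction k with
    | zero => exact fun x hx => ⟨0, by rw [pow_zero, one_nsmul] at hx; rw [hx, nsmul_zero]⟩
    | succ k ih =>
      intro x hx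
      obtain ⟨z, hz⟩ := H k x hx
      obtain ⟨y, hy⟩ := ih (x - p • z) (by rw [smul_sub, smul_smul, ← pow_succ, hz, sub_self])
      exact ⟨y + z, by rw [smul_add, hy, sub_add_cancel]⟩
  exact fun x => (hA x).elim (hdiv · x)

end IsPPrimary

namespace QmodZ

theorem baer : Module.Baer ℤ QmodZ :=
  Module.Baer.of_divisible (AddCircle (1 : ℚ))

theorem addOrderOf_one_div {n : ℕ} (hn : 0 < n) : addOrderOf ((1 / n : ℚ) : QmodZ) = n :=
  AddCircle.addOrderOf_period_div hn

theorem mem_zmultiples_one_div {n : ℕ} (hn : 0 < n) {y : QmodZ} (hy : n • y = 0) :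
    y ∈ zmultiples ((1 / n : ℚ) : QmodZ) := by
  obtain ⟨m, -, rfl⟩ := (AddCircle.nsmul_eq_zero_iff (p := (1 : ℚ)) hn).1 hy
  rw [AddCircle.natCast_div_mul_eq_nsmul]
  exact nsmul_mem (mem_zmultiples _) m

end QmodZ

namespace Prufer

def gen (p N : ℕ) : Prufer p :=
  ⟨((1 / (p ^ N : ℕ) : ℚ) : QmodZ), N, by
    rcases (p ^ N).eq_zero_or_pos with h | h
    · simp [h]
    · simpa only [QmodZ.addOrderOf_one_div h] using addOrderOf_nsmul_eq_zero
        ((1 / (p ^ N : ℕ) : ℚ) : QmodZ)⟩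

theorem addOrderOf_gen {p : ℕ} (hp : 0 < p) (N : ℕ) : addOrderOf (gen p N) = p ^ N := by
  rw [← AddSubgroup.addOrderOf_coe]
  exact QmodZ.addOrderOf_one_div (pow_pos hp N)

theorem addOrderOf_gen_one {p : ℕ} (hp : 0 < p) : addOrderOf (gen p 1) = p := by
  rw [addOrderOf_gen hp, pow_one]

theorem mem_zmultiples_gen {p : ℕ} (hp : 0 < p) {N : ℕ} {y : Prufer p} (hy : p ^ N • y = 0) :
    y ∈ zmultiples (gen p N) := by
  obtain ⟨t, ht⟩ := mem_zmultiples_iff.1 <| QmodZ.mem_zmultiples_one_div (pow_pos hp N)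
    (by rw [← AddSubgroup.coe_nsmul, hy, AddSubgroup.coe_zero] : (p ^ N) • (y : QmodZ) = 0)
  exact mem_zmultiples_iff.2 ⟨t, Subtype.ext ht⟩

theorem isPPrimary (p : ℕ) : IsPPrimary p (Prufer p) := fun y =>
  y.2.imp fun _ hn => Subtype.ext hn

theorem commute_addMonoidEnd {p : ℕ} (hp : 0 < p) (f g : AddMonoid.End (Prufer p)) : Commute f g := by
  refine AddMonoid.End.commute_of_forall_mem_zmultiples (fun y => ?_) f g
  obtain ⟨N, hN⟩ := isPPrimary p y
  refine ⟨gen p N, mem_zmultiples_gen hp hN, fun f => mem_zmultiples_gen hp ?_⟩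
  rw [← map_nsmul, ← addOrderOf_gen hp N, addOrderOf_nsmul_eq_zero, map_zero]

end Prufer

theorem ZMod.commute_addMonoidEnd (n : ℕ) (f g : AddMonoid.End (ZMod n)) : Commute f g := by
  have hgen (y : ZMod n) : y ∈ zmultiples 1 := by
    obtain ⟨t, rfl⟩ := ZMod.intCast_surjective y
    exact mem_zmultiples_iff.2 ⟨t, zsmul_one t⟩
  exact AddMonoid.End.commute_of_forall_mem_zmultiples (fun y => ⟨1, hgen y, fun f => hgen _⟩) f g

namespace IsPPrimary

variable {p : ℕ} {A : Type*} [AddCommGroup A] (hA : IsPPrimary p A)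
include hA

theorem exists_zmod_retraction (hp : p.Prime) (hnd : ¬ ∀ x : A, ∃ y, p • y = x) :
    ∃ k, 1 ≤ k ∧ ∃ (s : ZMod (p ^ k) →+ A) (r : A →+ ZMod (p ^ k)), ∀ y, r (s y) = y := by
  have := Fact.mk hp
  obtain ⟨h, b, hb, hpure⟩ := hA.exists_pure_element hnd
  have hn : 0 < p ^ (h + 1) := pow_pos hp.pos _
  let S := (nsmulAddMonoidHom (α := A) (p ^ (h + 1))).range
  have hS (x : A) : ((p ^ (h + 1) • x : A) : A ⧸ S) = 0 :=
    (QuotientAddGroup.eq_zero_iff _).2 ⟨x, rfl⟩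
  have hbS : addOrderOf (b : A ⧸ S) = p ^ (h + 1) := by
    refine addOrderOf_eq_prime_pow (fun h0 => ?_) (by rw [← QuotientAddGroup.mk_nsmul, hS])
    rw [← QuotientAddGroup.mk_nsmul, QuotientAddGroup.eq_zero_iff] at h0
    obtain ⟨x, hx⟩ := h0
    exact hpure x hx
  obtain ⟨g₀, hg₀⟩ := QmodZ.baer.exists_addMonoidHom_apply_eq (v := (b : A ⧸ S))
    (w := ((1 / (p ^ (h + 1) : ℕ) : ℚ) : QmodZ)) (by rw [hbS, QmodZ.addOrderOf_one_div hn])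
  let g := g₀.comp (QuotientAddGroup.mk' S)
  let s := zmodMultiplesHom b hb
  have hgs (t : ℤ) : g (s t) = t • ((1 / (p ^ (h + 1) : ℕ) : ℚ) : QmodZ) := by
    simp only [s, zmodMultiplesHom_intCast, map_zsmul]
    exact congrArg _ hg₀
  refine ⟨h + 1, by omega, s, exists_retraction_of_comp_injective g s ?_ ?_⟩
  · refine (injective_iff_map_eq_zero _).2 fun z hz => ?_
    obtain ⟨t, rfl⟩ := ZMod.intCast_surjective z
    rw [AddMonoidHom.comp_apply, hgs, ← addOrderOf_dvd_iff_zsmul_eq_zero,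
      QmodZ.addOrderOf_one_div hn] at hz
    exact (ZMod.intCast_zmod_eq_zero_iff_dvd t _).2 hz
  · rintro _ ⟨x, rfl⟩
    have hgx : p ^ (h + 1) • g x = 0 := by
      rw [← map_nsmul, AddMonoidHom.comp_apply, QuotientAddGroup.mk'_apply, hS, map_zero]
    obtain ⟨t, ht⟩ := mem_zmultiples_iff.1 (QmodZ.mem_zmultiples_one_div hn hgx)
    exact ⟨t, by rw [AddMonoidHom.comp_apply, hgs, ht]⟩

theorem exists_prufer_retraction (hp : p.Prime) (hdiv : ∀ x : A, ∃ y, p • y = x)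
    (hne : ∃ a : A, a ≠ 0) :
    ∃ (s : Prufer p →+ A) (r : A →+ Prufer p), ∀ y, r (s y) = y := by
  have := Fact.mk hp
  obtain ⟨a, ha0, hap⟩ := hA.exists_ne_zero_nsmul_eq_zero hne
  have hgen := Prufer.addOrderOf_gen_one hp.pos
  obtain ⟨s, hs⟩ := (hA.baer hp hdiv).exists_addMonoidHom_apply_eq (v := Prufer.gen p 1) (w := a)
    (by rw [hgen, addOrderOf_eq_prime hap ha0])
  have hs_inj : Injective s := (Prufer.isPPrimary p).injective_of_forall fun y hy hsy => by
    obtain ⟨t, rfl⟩ := mem_zmultiples_iff.1 (Prufer.mem_zmultiples_gen hp.pos (N := 1)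
      (by rwa [pow_one]))
    rw [map_zsmul, hs, ← addOrderOf_dvd_iff_zsmul_eq_zero, addOrderOf_eq_prime hap ha0, ← hgen,
      addOrderOf_dvd_iff_zsmul_eq_zero] at hsy
    exact hsy
  obtain ⟨g, hg⟩ := QmodZ.baer.extension_property_addMonoidHom s hs_inj (Prufer p).subtype
  refine ⟨s, exists_retraction_of_comp_injective g s (by rw [hg]; exact Subtype.val_injective) ?_⟩
  rw [hg, AddSubgroup.range_subtype]
  rintro _ ⟨x, rfl⟩
  obtain ⟨N, hN⟩ := hA x
  exact ⟨N, by rw [← map_nsmul, hN, map_zero]⟩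

theorem nonempty_addEquiv_of_retraction {B : Type*} [AddCommGroup B] {s : B →+ A} {r : A →+ B}
    (hrs : ∀ y, r (s y) = y) (hr : ∀ w, p • w = 0 → r w = 0 → w = 0) : Nonempty (A ≃+ B) :=
  ⟨AddEquiv.ofBijective r ⟨hA.injective_of_forall hr, LeftInverse.surjective hrs⟩⟩

end IsPPrimary

namespace IsCentrallyEssential

variable {A B : Type*} [AddCommGroup A] [AddCommGroup B]
  (hR : IsCentrallyEssential (AddMonoid.End A))
include hR

theorem eq_zero_of_zmod_retraction {n : ℕ} {s : ZMod n →+ A} {r : A →+ ZMod n}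
    (hrs : ∀ y, r (s y) = y) {w : A} (hw : n • w = 0) (hrw : r w = 0) : w = 0 := by
  -- `ψ = (1 ↦ w) ∘ r` sends `s 1` to `w`, so commuting with `s ∘ r` puts `w` into `range s`.
  simpa [hrs, hrw] using hR.apply_retraction_comm hrs ((zmodMultiplesHom w hw).comp r) (s 1)

theorem eq_zero_of_retraction_of_baer {p : ℕ} (hp : p.Prime) (hA : Module.Baer ℤ A)
    {s : B →+ A} {r : A →+ B} (hrs : ∀ y, r (s y) = y) {b : B} (hb : addOrderOf b = p)
    {w : A} (hw : p • w = 0) (hrw : r w = 0) : w = 0 := by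
  have := Fact.mk hp
  by_contra hw0
  obtain ⟨ψ, hψ⟩ := hA.exists_addMonoidHom_apply_eq (v := w) (w := s b) <| by
    rw [addOrderOf_eq_prime hw hw0]
    exact addOrderOf_dvd_of_nsmul_eq_zero (by rw [← map_nsmul, ← hb, addOrderOf_nsmul_eq_zero,
      map_zero])
  have h := hR.apply_retraction_comm hrs ψ w
  rw [hrw, map_zero, map_zero, hψ, hrs] at h
  have hb0 : b = 0 := by simpa [hrs] using congrArg r h.symm
  exact hp.ne_one (by rw [← hb, hb0, addOrderOf_zero])

theorem exists_addEquiv_zmod {p : ℕ} (hp : p.Prime) (hA : IsPPrimary p A)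
    (hnd : ¬ ∀ x : A, ∃ y, p • y = x) : ∃ k, 1 ≤ k ∧ Nonempty (A ≃+ ZMod (p ^ k)) := by
  obtain ⟨k, hk, s, r, hrs⟩ := hA.exists_zmod_retraction hp hnd
  refine ⟨k, hk, hA.nonempty_addEquiv_of_retraction hrs fun w hw hrw => ?_⟩
  refine hR.eq_zero_of_zmod_retraction hrs ?_ hrw
  obtain ⟨j, rfl⟩ := Nat.exists_eq_add_of_le' hk
  rw [pow_succ, mul_smul, hw, smul_zero]

theorem nonempty_addEquiv_prufer {p : ℕ} (hp : p.Prime) (hA : IsPPrimary p A)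
    (hdiv : ∀ x : A, ∃ y, p • y = x) (hne : ∃ a : A, a ≠ 0) : Nonempty (A ≃+ Prufer p) := by
  obtain ⟨s, r, hrs⟩ := hA.exists_prufer_retraction hp hdiv hne
  exact hA.nonempty_addEquiv_of_retraction hrs fun w hw hrw =>
    hR.eq_zero_of_retraction_of_baer hp (hA.baer hp hdiv) hrs (Prufer.addOrderOf_gen_one hp.pos)
      hw hrw

end IsCentrallyEssential

/-- the endomorphism ring of a nonzero abelian `p`-group `A` is centrally
essential iff `A ≅ ℤ/p^kℤ` for some `k ≥ 1` or `A ≅ ℤ(p^∞)`. -/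
theorem isCentrallyEssential_end_of_pGroup_iff
    (p : ℕ) (hp : p.Prime) (A : Type*) [AddCommGroup A] (hA : ∃ a : A, a ≠ 0)
    (hpgroup : ∀ a : A, ∃ n : ℕ, p ^ n • a = 0) :
    IsCentrallyEssential (AddMonoid.End A) ↔
      (∃ k : ℕ, 1 ≤ k ∧ Nonempty (A ≃+ ZMod (p ^ k))) ∨
        Nonempty (A ≃+ ↥(Prufer p)) := by
  have hpp : IsPPrimary p A := hpgroup
  constructor
  · intro hce
    by_cases hdiv : ∀ x : A, ∃ y, p • y = x
    · exact .inr (hce.nonempty_addEquiv_prufer hp hpp hdiv hA)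
    · exact .inl (hce.exists_addEquiv_zmod hp hpp hdiv)
  · have : Nontrivial (AddMonoid.End A) := by
      obtain ⟨a, ha⟩ := hA
      exact ⟨⟨1, 0, fun h => ha (DFunLike.congr_fun h a)⟩⟩
    rintro (⟨k, -, ⟨e⟩⟩ | ⟨⟨e⟩⟩)
    · exact .of_commute (AddMonoid.End.commute_of_addEquiv e (ZMod.commute_addMonoidEnd _))
    · exact .of_commute (AddMonoid.End.commute_of_addEquiv e (Prufer.commute_addMonoidEnd hp.pos))
end

section
/- Let R be an Artinian local ring that is not a division ring, let C be its center, and suppose C ∩ M ≠ 0 for every minimal right ideal M of R and the quotient R/J(R) is commutative. Then every minimal right ideal M of R is contained in the center C of R. -/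
/-- A right ideal of `R`: an additive subgroup stable under right multiplication. -/
def IsRightIdeal {R : Type*} [Ring R] (M : AddSubgroup R) : Prop :=
  ∀ a ∈ M, ∀ r : R, a * r ∈ M

/-- A minimal right ideal: a nonzero right ideal properly containing no nonzero
right ideal. -/
def IsMinimalRightIdeal {R : Type*} [Ring R] (M : AddSubgroup R) : Prop :=
  M ≠ ⊥ ∧ IsRightIdeal M ∧
    ∀ N : AddSubgroup R, IsRightIdeal N → N ≤ M → N = ⊥ ∨ N = M

/-!
Let `c ≠ 0` be central in the minimal right ideal `M`, and `J` the Jacobson radical. The right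
ideal `cJ ⊆ M` cannot be all of `M`, since `c = cs` with `s ∈ J` forces `c = 0` (`1 - s` is a
unit); so `cJ = 0`. Minimality also gives `M = cR`. Since `R/J` is commutative, `rg - gr ∈ J`,
hence `c r g = c g r = g c r`, and every element `cr` of `M` is central.
-/

section

variable {R : Type*} [Ring R]

theorem isRightIdeal_map_mulLeft (c : R) (I : Ideal R) [I.IsTwoSided] :
    IsRightIdeal (I.toAddSubgroup.map (AddMonoidHom.mulLeft c)) := by
  rintro _ ⟨s, hs, rfl⟩ r
  exact ⟨s * r, I.mul_mem_right r hs, (mul_assoc c s r).symm⟩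

theorem IsRightIdeal.map_mulLeft_le {M : AddSubgroup R} (hM : IsRightIdeal M) {c : R}
    (hc : c ∈ M) (I : Ideal R) : I.toAddSubgroup.map (AddMonoidHom.mulLeft c) ≤ M := by
  rintro _ ⟨s, -, rfl⟩
  exact hM c hc s

theorem exists_mul_one_add_eq_one_of_mem_jacobson_bot {s : R} (hs : s ∈ Ideal.jacobson ⊥) :
    ∃ t, t * (1 + s) = 1 := by
  obtain ⟨t, ht⟩ := Ideal.exists_mul_add_sub_mem_of_mem_jacobson s hs
  exact ⟨t, by rwa [Ideal.mem_bot, sub_eq_zero, add_comm] at ht⟩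

theorem isUnit_one_add_of_mem_jacobson_bot {s : R} (hs : s ∈ Ideal.jacobson ⊥) :
    IsUnit (1 + s) := by
  obtain ⟨t, ht⟩ := exists_mul_one_add_eq_one_of_mem_jacobson_bot hs
  -- `t = 1 - t s` has a left inverse as well, which must then be `1 + s`.
  have hts : -(t * s) ∈ Ideal.jacobson (⊥ : Ideal R) := neg_mem (Ideal.mul_mem_left _ t hs)
  obtain ⟨u, hu⟩ := exists_mul_one_add_eq_one_of_mem_jacobson_bot hts
  have ht' : 1 + -(t * s) = t := by rw [← sub_eq_add_neg, sub_eq_iff_eq_add, ← mul_one_add, ht]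
  have hu' : u = 1 + s := by
    calc u = u * (t * (1 + s)) := by rw [ht, mul_one]
      _ = 1 + s := by rw [← mul_assoc, ← ht', hu, one_mul]
  exact isUnit_iff_exists.mpr ⟨t, hu' ▸ ht' ▸ hu, ht⟩

theorem eq_zero_of_mul_eq_self_of_mem_jacobson {c s : R} (hs : s ∈ Ideal.jacobson ⊥)
    (hcs : c * s = c) : c = 0 := by
  have hzero : c * (1 + -s) = 0 := by rw [mul_add, mul_one, mul_neg, hcs, add_neg_cancel]
  exact (isUnit_one_add_of_mem_jacobson_bot (neg_mem hs)).mul_left_eq_zero.mp hzero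

namespace IsMinimalRightIdeal

variable {M : AddSubgroup R} (hM : IsMinimalRightIdeal M) {c : R} (hc : c ∈ M)
include hM hc

theorem mul_eq_zero_of_mem_jacobson {j : R} (hj : j ∈ Ideal.jacobson ⊥) : c * j = 0 := by
  rcases hM.2.2 _ (isRightIdeal_map_mulLeft c (Ideal.jacobson ⊥))
      (hM.2.1.map_mulLeft_le hc (Ideal.jacobson ⊥)) with hbot | htop
  · exact (AddSubgroup.mem_bot).mp (hbot ▸ ⟨j, hj, rfl⟩)
  · obtain ⟨s, hs, hcs⟩ := htop ▸ hc
    rw [eq_zero_of_mul_eq_self_of_mem_jacobson hs hcs, zero_mul]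

theorem exists_mul_eq (hc0 : c ≠ 0) {x : R} (hx : x ∈ M) : ∃ r, c * r = x := by
  rcases hM.2.2 _ (isRightIdeal_map_mulLeft c ⊤) (hM.2.1.map_mulLeft_le hc ⊤) with hbot | htop
  · exact absurd ((AddSubgroup.mem_bot).mp (hbot ▸ ⟨1, trivial, mul_one c⟩)) hc0
  · obtain ⟨r, -, hr⟩ := htop ▸ hx
    exact ⟨r, hr⟩

end IsMinimalRightIdeal

theorem mul_mem_center_of_mul_jacobson_eq_zero {c : R} (hc : c ∈ Set.center R)
    (hcJ : ∀ j ∈ Ideal.jacobson (⊥ : Ideal R), c * j = 0)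
    (hcomm : ∀ a b : R, a * b - b * a ∈ Ideal.jacobson (⊥ : Ideal R)) (r : R) :
    c * r ∈ Set.center R := by
  rw [Semigroup.mem_center_iff] at hc ⊢
  intro g
  have hswap : c * (r * g) = c * (g * r) :=
    sub_eq_zero.mp (by rw [← mul_sub]; exact hcJ _ (hcomm r g))
  rw [← mul_assoc, hc, mul_assoc, mul_assoc, hswap]

end

theorem minimal_right_ideal_subset_center_general
    (R : Type*) [Ring R]
    (hmeet : ∀ M : AddSubgroup R, IsMinimalRightIdeal M →
      ∃ x : R, x ≠ 0 ∧ x ∈ Set.center R ∧ x ∈ M)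
    (hcomm : ∀ a b : R, a * b - b * a ∈ Ideal.jacobson (⊥ : Ideal R)) :
    ∀ M : AddSubgroup R, IsMinimalRightIdeal M → ∀ x ∈ M, x ∈ Set.center R := by
  intro M hM x hxM
  obtain ⟨c, hc0, hcC, hcM⟩ := hmeet M hM
  obtain ⟨r, rfl⟩ := hM.exists_mul_eq hcM hc0 hxM
  exact mul_mem_center_of_mul_jacobson_eq_zero hcC
    (fun _ hj => hM.mul_eq_zero_of_mem_jacobson hcM hj) hcomm r

/-- in a local Artinian ring `R` which is not a division ring, if
`C(R) ∩ M ≠ 0` for every minimal right ideal `M` and `R/J(R)` is commutative, then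
every minimal right ideal of `R` is contained in the center of `R`. -/
theorem minimal_right_ideal_subset_center
    (R : Type*) [Ring R] [IsLocalRing R] [IsArtinianRing R]
    (hnd : ∃ a : R, a ≠ 0 ∧ ¬IsUnit a)
    (hmeet : ∀ M : AddSubgroup R, IsMinimalRightIdeal M →
      ∃ x : R, x ≠ 0 ∧ x ∈ Set.center R ∧ x ∈ M)
    (hcomm : ∀ a b : R, a * b - b * a ∈ Ideal.jacobson (⊥ : Ideal R)) :
    ∀ M : AddSubgroup R, IsMinimalRightIdeal M → ∀ x ∈ M, x ∈ Set.center R :=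
  minimal_right_ideal_subset_center_general R hmeet hcomm
end

section
/- Let A be a strongly indecomposable torsion-free abelian group of finite rank with quasi-endomorphism ring ℚEnd(A) = ℚ ⊗_ℤ End(A), and suppose A ≠ PSoc(A). If ℚEnd(A) is a centrally essential ring, then the quotient ring ℚEnd(A)/J(ℚEnd(A)) is commutative and C(ℚEnd(A)) ∩ M ≠ 0 for every minimal right ideal M of ℚEnd(A). -/
open TensorProduct

/-- A subgroup `B` of an abelian group `A` is pure if every equation `n • x = b` (`b ∈ B`,
`n > 0`) solvable in `A` is solvable in `B`. -/
def IsPureSubgroup {A : Type*} [AddCommGroup A] (B : AddSubgroup A) : Prop :=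
  ∀ n : ℕ, 0 < n → ∀ b ∈ B, (∃ x : A, n • x = b) → ∃ y ∈ B, n • y = b

/-- A subgroup `B` of an abelian group `A` is fully invariant if it is stable under every
endomorphism of `A`. -/
def IsFullyInvariant {A : Type*} [AddCommGroup A] (B : AddSubgroup A) : Prop :=
  ∀ f : AddMonoid.End A, ∀ b ∈ B, f b ∈ B

/-- A minimal nonzero pure fully invariant subgroup. -/
def IsMinimalPureFullyInvariant {A : Type*} [AddCommGroup A] (B : AddSubgroup A) : Prop :=
  B ≠ ⊥ ∧ IsPureSubgroup B ∧ IsFullyInvariant B ∧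
    ∀ C : AddSubgroup A, C ≠ ⊥ → IsPureSubgroup C → IsFullyInvariant C → C ≤ B → C = B

/-- The pseudo-socle of `A`: the smallest pure subgroup containing all minimal nonzero
pure fully invariant subgroups of `A`. -/
def PSoc (A : Type*) [AddCommGroup A] : AddSubgroup A :=
  sInf {P : AddSubgroup A | IsPureSubgroup P ∧
    sSup {B : AddSubgroup A | IsMinimalPureFullyInvariant B} ≤ P}

/-- A torsion-free abelian group `A` is strongly indecomposable if there are no nonzero
subgroups `B, C` with `B ∩ C = 0` and `n • A ⊆ B + C` for some positive integer `n`. -/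
def StronglyIndecomposable (A : Type*) [AddCommGroup A] : Prop :=
  ¬∃ B C : AddSubgroup A, B ≠ ⊥ ∧ C ≠ ⊥ ∧ B ⊓ C = ⊥ ∧
    ∃ n : ℕ, 0 < n ∧ ∀ a : A, n • a ∈ B ⊔ C

/-!
`ℚEnd A` embeds in `End_ℚ (ℚ ⊗ A)`, so it is a finite-dimensional, hence Artinian, `ℚ`-algebra.
Its idempotents are trivial: clearing denominators, an idempotent `e` gives `n • e = 1 ⊗ f` with
`f * f = n • f`, and `range f`, `ker f` would split `n • A`. By Fitting's lemma every element is
then a unit or nilpotent, so every nonunit lies in the Jacobson radical. A central element `z ≠ 0`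
with `R z` minimal kills every nonunit; then all `r * z` are central, so `(a * b - b * a) * z = 0`
and no commutator is a unit.
-/

section RingTheory

variable {R : Type*} [Ring R]

/-- Fitting's lemma for right multiplication by `x`: for large `n`, `R` is the direct sum of the
left ideals `ann_l(xⁿ)` and `R xⁿ`, and the component of `1` in the first one is idempotent. -/
theorem IsArtinianRing.isUnit_or_isNilpotent [IsArtinianRing R]
    (hidem : ∀ e : R, IsIdempotentElem e → e = 0 ∨ e = 1) (x : R) :
    IsUnit x ∨ IsNilpotent x := by
  set f := LinearMap.toSpanSingleton R R x
  have hpow : ∀ n r, (f ^ n) r = r * x ^ n := by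
    intro n
    induction n with
    | zero => simp
    | succ n ih => intro r; rw [pow_succ', Module.End.mul_apply, ih, pow_succ, ← mul_assoc]; rfl
  obtain ⟨n, hn, hcompl⟩ :=
    ((Filter.eventually_ge_atTop 1).and f.eventually_isCompl_ker_pow_range_pow).exists
  obtain ⟨e, he, g, hg, heg⟩ :=
    Submodule.mem_sup.mp (codisjoint_iff.mp hcompl.codisjoint ▸ Submodule.mem_top (x := (1 : R)))
  have heg' : e * g = 0 := by
    refine Submodule.disjoint_def.mp hcompl.disjoint _ ?_ (Submodule.smul_mem _ e hg)
    rw [show e * g = e - e • e by rw [smul_eq_mul, eq_sub_iff_add_eq', ← mul_add, heg, mul_one]]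
    exact sub_mem he (Submodule.smul_mem _ e he)
  have hidem_e : IsIdempotentElem e := by
    rw [IsIdempotentElem, ← add_zero (e * e), ← heg', ← mul_add, heg, mul_one]
  rcases hidem e hidem_e with rfl | rfl
  · obtain ⟨r, hr⟩ := hg
    rw [zero_add] at heg
    rw [hpow, heg] at hr
    exact .inl ((isUnit_pow_iff (by omega)).mp (IsUnit.of_mul_eq_one_right r hr))
  · refine .inr ⟨n, ?_⟩
    simpa [hpow] using he

theorem mem_jacobson_bot_of_not_isUnit [IsDedekindFiniteMonoid R]
    (hR : ∀ x : R, IsUnit x ∨ IsNilpotent x) {x : R} (hx : ¬IsUnit x) :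
    x ∈ Ideal.jacobson (⊥ : Ideal R) := by
  refine Ideal.mem_jacobson_iff.mpr fun y => ?_
  have hyx : ¬IsUnit (y * x) := fun h => hx (isUnit_of_mul_isUnit_right h)
  obtain ⟨u, hu⟩ := ((hR (y * x)).resolve_left hyx).isUnit_add_one
  refine ⟨↑u⁻¹, ?_⟩
  rw [Ideal.mem_bot, mul_assoc, sub_eq_zero, ← mul_add_one, ← hu, Units.inv_mul]

namespace IsCentrallyEssential

theorem exists_ne_zero_mem_center_mem (hce : IsCentrallyEssential R) {M : AddSubgroup R}
    (hM : IsRightIdeal M) (hM0 : M ≠ ⊥) : ∃ x : R, x ≠ 0 ∧ x ∈ Set.center R ∧ x ∈ M := by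
  obtain ⟨a, haM, ha0⟩ := (M.bot_or_exists_ne_zero).resolve_left hM0
  obtain ⟨x, y, -, hy, -, hy0, hxy⟩ := hce a ha0
  exact ⟨y, hy0, hy, hxy ▸ hM a haM x⟩

theorem mul_mem_center (hce : IsCentrallyEssential R) {z : R}
    (hz : ∀ n : R, ¬IsUnit n → z * n = 0) (r : R) : r * z ∈ Set.center R := by
  rcases eq_or_ne (r * z) 0 with h | h
  · exact h ▸ Set.zero_mem_center
  obtain ⟨x, y, hx, hy, -, hy0, hxy⟩ := hce _ h
  have hxu : IsUnit x := by_contra fun hxu => hy0 (by rw [← hxy, mul_assoc, hz x hxu, mul_zero])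
  refine Semigroup.mem_center_iff.mpr fun g => hxu.mul_right_cancel ?_
  calc g * (r * z) * x = g * y := by rw [mul_assoc, hxy]
    _ = y * g := Semigroup.mem_center_iff.mp hy g
    _ = r * z * g * x := by
      rw [← hxy, mul_assoc (r * z), ← Semigroup.mem_center_iff.mp hx g, ← mul_assoc]

/-- Take `z` central with `R z` minimal: if `z n ≠ 0` for a nonunit `n`, then the central element
`z n x` generates a strictly smaller ideal, since otherwise `z = z m` with `1 - m` a unit. -/
theorem exists_mem_center_forall_not_isUnit_mul_eq_zero [IsArtinianRing R] [Nontrivial R]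
    (hce : IsCentrallyEssential R) (hR : ∀ x : R, IsUnit x ∨ IsNilpotent x) :
    ∃ z ∈ Set.center R, z ≠ 0 ∧ ∀ n : R, ¬IsUnit n → z * n = 0 := by
  obtain ⟨_, ⟨z, hz, hz0, rfl⟩, hmin⟩ := wellFounded_lt.has_min
    {I : Ideal R | ∃ z ∈ Set.center R, z ≠ 0 ∧ Ideal.span {z} = I}
    ⟨_, 1, Set.one_mem_center, one_ne_zero, rfl⟩
  refine ⟨z, hz, hz0, fun n hn => by_contra fun hzn => ?_⟩
  obtain ⟨x, y, -, hy, -, hy0, hxy⟩ := hce _ hzn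
  have hyz : Ideal.span {y} ≤ Ideal.span {z} := by
    rw [Ideal.span_singleton_le_iff_mem, Ideal.mem_span_singleton']
    exact ⟨n * x, by rw [← hxy, Semigroup.mem_center_iff.mp hz, mul_assoc]⟩
  obtain ⟨r, hr⟩ : ∃ r, r * y = z := Ideal.mem_span_singleton'.mp <|
    (hyz.lt_or_eq.resolve_left (hmin _ ⟨y, hy, hy0, rfl⟩)).symm ▸ Ideal.mem_span_singleton_self z
  have hm : ¬IsUnit (n * (x * r)) := fun h => hn (isUnit_of_mul_isUnit_left h)
  refine hz0 ((((hR _).resolve_left hm).isUnit_one_sub.mul_left_eq_zero).mp ?_)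
  rw [mul_sub, mul_one, sub_eq_zero]
  calc z = r * y := hr.symm
    _ = y * r := Semigroup.mem_center_iff.mp hy r
    _ = z * (n * (x * r)) := by rw [← hxy]; noncomm_ring

theorem commutator_mem_jacobson_bot [IsArtinianRing R] [Nontrivial R]
    (hce : IsCentrallyEssential R) (hR : ∀ x : R, IsUnit x ∨ IsNilpotent x) (a b : R) :
    a * b - b * a ∈ Ideal.jacobson (⊥ : Ideal R) := by
  obtain ⟨z, hz, hz0, hann⟩ := hce.exists_mem_center_forall_not_isUnit_mul_eq_zero hR
  refine mem_jacobson_bot_of_not_isUnit hR fun hu => hz0 (hu.mul_right_eq_zero.mp ?_)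
  have hbz := Semigroup.mem_center_iff.mp (hce.mul_mem_center hann b)
  calc (a * b - b * a) * z = a * (b * z) - b * (a * z) := by noncomm_ring
    _ = 0 := by rw [hbz a, mul_assoc, ← Semigroup.mem_center_iff.mp hz a, sub_self]

end IsCentrallyEssential

end RingTheory

section QuasiEndomorphisms

variable {A : Type*} [AddCommGroup A]

instance [IsAddTorsionFree A] : IsAddTorsionFree (AddMonoid.End A) :=
  DFunLike.coe_injective.isAddTorsionFree (AddMonoidHom.coeFn A A)

theorem one_tmul_injective (M : Type*) [AddCommGroup M] [IsAddTorsionFree M] :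
    Function.Injective fun m : M => (1 : ℚ) ⊗ₜ[ℤ] m :=
  (IsLocalizedModule.injective_iff_isRegular (nonZeroDivisors ℤ) (TensorProduct.mk ℤ ℚ M 1)).mpr
    fun c => IsSMulRegular.of_ne_zero (nonZeroDivisors.coe_ne_zero c)

theorem exists_nsmul_eq_one_tmul {M : Type*} [AddCommGroup M] (t : ℚ ⊗[ℤ] M) :
    ∃ n : ℕ, 0 < n ∧ ∃ m : M, n • t = (1 : ℚ) ⊗ₜ[ℤ] m := by
  obtain ⟨⟨m, c⟩, hc⟩ := IsLocalizedModule.surj (nonZeroDivisors ℤ) (TensorProduct.mk ℤ ℚ M 1) t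
  have hc0 : 0 < (c : ℤ).natAbs := Int.natAbs_pos.mpr (nonZeroDivisors.coe_ne_zero c)
  rcases Int.natAbs_eq (c : ℤ) with h | h
  · exact ⟨_, hc0, m, by rw [← natCast_zsmul, ← h]; exact hc⟩
  · refine ⟨_, hc0, -m, ?_⟩
    rw [← natCast_zsmul, ← neg_eq_iff_eq_neg.mpr h, neg_smul, tmul_neg]
    exact congrArg Neg.neg hc

variable (A) in
noncomputable def quasiEndToEnd : ℚ ⊗[ℤ] AddMonoid.End A →ₗ[ℚ] Module.End ℚ (ℚ ⊗[ℤ] A) :=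
  LinearMap.liftBaseChange ℚ
    (LinearMap.baseChangeHom ℤ ℚ A A ∘ₗ (addMonoidEndRingEquivInt A).toAddMonoidHom.toIntLinearMap)

theorem quasiEndToEnd_one_tmul (f : AddMonoid.End A) (a : A) :
    quasiEndToEnd A ((1 : ℚ) ⊗ₜ f) ((1 : ℚ) ⊗ₜ a) = (1 : ℚ) ⊗ₜ f a := by
  rw [quasiEndToEnd, LinearMap.liftBaseChange_tmul, one_smul]
  exact LinearMap.baseChange_tmul _ _ _

theorem quasiEndToEnd_injective [IsAddTorsionFree A] : Function.Injective (quasiEndToEnd A) := by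
  refine IsLocalizedModule.injective_of_map_zero (nonZeroDivisors ℤ)
    (TensorProduct.mk ℤ ℚ (AddMonoid.End A) 1) (g := (quasiEndToEnd A).restrictScalars ℤ)
    fun f hf => ?_
  replace hf : quasiEndToEnd A ((1 : ℚ) ⊗ₜ f) = 0 := hf
  suffices f = 0 by simp [this]
  ext a
  apply one_tmul_injective A
  simpa [quasiEndToEnd_one_tmul] using LinearMap.congr_fun hf ((1 : ℚ) ⊗ₜ a)

theorem finiteDimensional_quasiEnd [IsAddTorsionFree A] [FiniteDimensional ℚ (ℚ ⊗[ℤ] A)] :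
    FiniteDimensional ℚ (ℚ ⊗[ℤ] AddMonoid.End A) :=
  .of_injective (quasiEndToEnd A) quasiEndToEnd_injective

theorem nontrivial_quasiEnd [IsAddTorsionFree A] [Nontrivial A] :
    Nontrivial (ℚ ⊗[ℤ] AddMonoid.End A) := by
  obtain ⟨a, ha⟩ := exists_ne (0 : A)
  have h10 : (1 : AddMonoid.End A) ≠ 0 := fun h => ha (DFunLike.congr_fun h a)
  refine nontrivial_of_ne 1 0 fun h => h10 (one_tmul_injective _ ?_)
  simpa [Algebra.TensorProduct.one_def] using h

theorem nontrivial_of_pSoc_ne_top (h : PSoc A ≠ ⊤) : Nontrivial A := by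
  by_contra hA
  have := not_nontrivial_iff_subsingleton.mp hA
  exact h (Subsingleton.elim _ _)

namespace StronglyIndecomposable

/-- Otherwise `range f` and `ker f` violate strong indecomposability: they meet trivially as `A`
is torsion-free, and `n • a = f a + (n • a - f a)`. -/
theorem eq_zero_or_eq_nsmul_one [IsAddTorsionFree A] (hA : StronglyIndecomposable A) {n : ℕ}
    (hn : 0 < n) {f : AddMonoid.End A} (hf : f * f = n • f) : f = 0 ∨ f = n • 1 := by
  have hff (a : A) : f (f a) = n • f a := DFunLike.congr_fun hf a
  have hker (a : A) : n • a - f a ∈ f.ker := by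
    change f (n • a - f a) = 0
    rw [map_sub, map_nsmul, hff, sub_self]
  by_contra! h
  refine hA ⟨f.range, f.ker, AddMonoidHom.range_eq_bot_iff.not.mpr h.1, fun hbot => h.2 ?_, ?_,
    n, hn, fun a => ?_⟩
  · ext a
    exact (AddMonoidHom.ker_eq_bot_iff f).mp hbot ((hff a).trans (map_nsmul f n a).symm)
  · rw [eq_bot_iff]
    rintro _ ⟨⟨a, rfl⟩, hfa : f (f a) = 0⟩
    rwa [hff, nsmul_eq_zero_iff_right hn.ne'] at hfa
  · rw [show n • a = f a + (n • a - f a) by abel]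
    exact add_mem (AddSubgroup.mem_sup_left ⟨a, rfl⟩) (AddSubgroup.mem_sup_right (hker a))

theorem eq_zero_or_eq_one_of_isIdempotentElem [IsAddTorsionFree A]
    (hA : StronglyIndecomposable A) {e : ℚ ⊗[ℤ] AddMonoid.End A} (he : IsIdempotentElem e) :
    e = 0 ∨ e = 1 := by
  have : IsAddTorsionFree (ℚ ⊗[ℤ] AddMonoid.End A) := .of_module_rat _
  obtain ⟨n, hn, f, hf⟩ := exists_nsmul_eq_one_tmul e
  have hff : f * f = n • f := by
    refine one_tmul_injective _ ?_
    calc (1 : ℚ) ⊗ₜ[ℤ] (f * f) = (n • e) * (n • e) := by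
          rw [hf, Algebra.TensorProduct.tmul_mul_tmul, one_mul]
      _ = n • (1 : ℚ) ⊗ₜ[ℤ] f := by rw [smul_mul_smul_comm, he.eq, mul_smul, hf]
      _ = (1 : ℚ) ⊗ₜ[ℤ] (n • f) := (map_nsmul (TensorProduct.mk ℤ ℚ _ 1) n f).symm
  refine (hA.eq_zero_or_eq_nsmul_one hn hff).imp (fun h => ?_) (fun h => ?_) <;>
    refine nsmul_right_injective hn.ne' (hf.trans ?_)
  · simp [h]
  · rw [h, Algebra.TensorProduct.one_def]
    exact map_nsmul (TensorProduct.mk ℤ ℚ _ 1) n 1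

end StronglyIndecomposable

end QuasiEndomorphisms

/-- for a strongly indecomposable torsion-free abelian group `A` of finite
rank with `A ≠ PSoc A`, if the quasi-endomorphism ring `ℚEnd A = ℚ ⊗ End A` is
centrally essential then `ℚEnd A / J(ℚEnd A)` is commutative and
`C(ℚEnd A) ∩ M ≠ 0` for every minimal right ideal `M` of `ℚEnd A`. -/
theorem comm_mod_jacobson_of_isCentrallyEssential_quasiEnd
    (A : Type*) [AddCommGroup A]
    (htf : ∀ (n : ℕ) (a : A), 0 < n → n • a = 0 → a = 0)
    (hsi : StronglyIndecomposable A)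
    (hfr : FiniteDimensional ℚ (ℚ ⊗[ℤ] A))
    (hpsoc : PSoc A ≠ ⊤)
    (hce : IsCentrallyEssential (ℚ ⊗[ℤ] AddMonoid.End A)) :
    (∀ a b : ℚ ⊗[ℤ] AddMonoid.End A,
        a * b - b * a ∈ Ideal.jacobson (⊥ : Ideal (ℚ ⊗[ℤ] AddMonoid.End A))) ∧
      ∀ M : AddSubgroup (ℚ ⊗[ℤ] AddMonoid.End A), IsMinimalRightIdeal M →
        ∃ x : ℚ ⊗[ℤ] AddMonoid.End A,
          x ≠ 0 ∧ x ∈ Set.center (ℚ ⊗[ℤ] AddMonoid.End A) ∧ x ∈ M := by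
  have : IsAddTorsionFree A := ⟨fun n hn a b hab => sub_eq_zero.mp <|
    htf n _ (Nat.pos_of_ne_zero hn) (by rw [nsmul_sub, sub_eq_zero]; exact hab)⟩
  have := nontrivial_of_pSoc_ne_top hpsoc
  have := nontrivial_quasiEnd (A := A)
  have := finiteDimensional_quasiEnd (A := A)
  have := IsArtinianRing.of_finite ℚ (ℚ ⊗[ℤ] AddMonoid.End A)
  have hR :=
    IsArtinianRing.isUnit_or_isNilpotent fun _ => hsi.eq_zero_or_eq_one_of_isIdempotentElem
  exact ⟨hce.commutator_mem_jacobson_bot hR,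
    fun M hM => hce.exists_ne_zero_mem_center_mem hM.2.1 hM.1⟩
end
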